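/- The series ∑_{n≥0} S_n / 108^n converges to 3√3/8, where S_0 = 1/2 and S_n = C(6n,3n)·C(3n,n)/(2(2n+1)·C(2n,n)) for n ≥ 1. -/

import Mathlib

/-
The terms are hypergeometric: `S n / 108 ^ n = (1/6)ₙ (5/6)ₙ / (2 n! (3/2)ₙ)`, so the sum is
`₂F₁(1/6, 5/6; 3/2; 1) / 2`. Gauss's summation theorem evaluates it as
`Γ(3/2) Γ(1/2) / (2 Γ(2/3) Γ(4/3))`, and the reflection formula `Γ(1/3) Γ(2/3) = 2π/√3` turns this
into `3√3/8`. Gauss's theorem is obtained from Euler's integral: writing `(a)ₙ / (c)ₙ` as a ratio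
of Beta integrals and summing the binomial series `∑ (α)ₙ/n! tⁿ = (1 - t)^(-α)` under the integral
(dominated by its nonnegative sum) gives another Beta integral.
-/

noncomputable def S (n : ℕ) : ℝ :=
  if n = 0 then 1 / 2 else
    (Nat.choose (6 * n) (3 * n) * Nat.choose (3 * n) n : ℝ)
      / (2 * (2 * n + 1) * Nat.choose (2 * n) n)

open MeasureTheory Set

theorem Complex.ofReal_rpow_mul_one_sub_rpow {a b t : ℝ} (ht : t ∈ Icc (0 : ℝ) 1) :
    ((t ^ (a - 1) * (1 - t) ^ (b - 1) : ℝ) : ℂ) =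
      (t : ℂ) ^ ((a : ℂ) - 1) * (1 - (t : ℂ)) ^ ((b : ℂ) - 1) := by
  rw [Complex.ofReal_mul, Complex.ofReal_cpow ht.1, Complex.ofReal_cpow (sub_nonneg.2 ht.2)]
  push_cast
  rfl

theorem Ring.choose_add_nat_sub_one {K : Type*} [Field K] [CharZero K] (a : K) (n : ℕ) :
    Ring.choose (a + n - 1) n = (ascPochhammer K n).eval a / n.factorial := by
  rw [← Ring.multichoose_eq, eq_div_iff (Nat.cast_ne_zero.2 n.factorial_ne_zero), mul_comm,
    ← nsmul_eq_mul, Ring.factorial_nsmul_multichoose_eq_ascPochhammer,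
    Polynomial.ascPochhammer_smeval_eq_eval]

namespace Real

theorem integrableOn_rpow_mul_one_sub_rpow {a b : ℝ} (ha : 0 < a) (hb : 0 < b) :
    IntegrableOn (fun t : ℝ => t ^ (a - 1) * (1 - t) ^ (b - 1)) (Ioo 0 1) := by
  have hC := Complex.betaIntegral_convergent (u := a) (v := b) (by simpa) (by simpa)
  rw [intervalIntegrable_iff_integrableOn_Ioc_of_le zero_le_one] at hC
  refine (IntegrableOn.mono_set hC.re Ioo_subset_Ioc_self).congr_fun (fun t ht => ?_)
    measurableSet_Ioo
  simp only [← Complex.ofReal_rpow_mul_one_sub_rpow (Ioo_subset_Icc_self ht), RCLike.re_to_complex,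
    Complex.ofReal_re]

theorem integral_rpow_mul_one_sub_rpow {a b : ℝ} (ha : 0 < a) (hb : 0 < b) :
    ∫ t in Ioo (0 : ℝ) 1, t ^ (a - 1) * (1 - t) ^ (b - 1) = Gamma a * Gamma b / Gamma (a + b) := by
  apply Complex.ofReal_injective
  rw [← integral_Ioc_eq_integral_Ioo, ← intervalIntegral.integral_of_le zero_le_one,
    ← intervalIntegral.integral_ofReal, intervalIntegral.integral_congr
      (g := fun t : ℝ => (t : ℂ) ^ ((a : ℂ) - 1) * (1 - (t : ℂ)) ^ ((b : ℂ) - 1))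
      (fun t ht => Complex.ofReal_rpow_mul_one_sub_rpow (by rwa [uIcc_of_le zero_le_one] at ht)),
    ← Complex.betaIntegral, Complex.betaIntegral_eq_Gamma_mul_div _ _ (by simpa) (by simpa)]
  push_cast [← Complex.Gamma_ofReal]
  rfl

theorem Gamma_add_nat {a : ℝ} (ha : 0 < a) (n : ℕ) :
    Gamma (a + n) = (ascPochhammer ℝ n).eval a * Gamma a := by
  induction n with
  | zero => simp
  | succ n ih =>
    rw [Nat.cast_succ, ← add_assoc, Gamma_add_one (by positivity), ih, ascPochhammer_succ_eval]
    ring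

theorem hasSum_ascPochhammer_div_factorial_mul_pow (a : ℝ) {x : ℝ} (hx : |x| < 1) :
    HasSum (fun n => (ascPochhammer ℝ n).eval a / n.factorial * x ^ n) ((1 - x) ^ (-a)) := by
  have h := (one_div_one_sub_rpow_hasFPowerSeriesOnBall_zero a).hasSum
    (y := x) (by simpa [enorm_eq_nnnorm, ← NNReal.coe_lt_coe] using hx)
  simp only [FormalMultilinearSeries.ofScalars_apply_eq, Ring.choose_add_nat_sub_one, smul_eq_mul,
    zero_add] at h
  rwa [rpow_neg (by linarith [abs_lt.1 hx]), inv_eq_one_div]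

theorem hasSum_ordinaryHypergeometricCoefficient_one {α a c : ℝ} (hα : 0 < α) (ha : 0 < a)
    (hc : a + α < c) :
    HasSum (ordinaryHypergeometricCoefficient α a c)
      (Gamma c * Gamma (c - a - α) / (Gamma (c - a) * Gamma (c - α))) := by
  set b := c - a
  have hb : 0 < b := by simp only [b]; linarith
  have hbα : 0 < b - α := by simp only [b]; linarith
  set w : ℕ → ℝ → ℝ := fun n t =>
    (ascPochhammer ℝ n).eval α / n.factorial * (t ^ (a + n - 1) * (1 - t) ^ (b - 1))
  have hw_nonneg (n : ℕ) {t : ℝ} (ht : t ∈ Ioo (0 : ℝ) 1) : 0 ≤ w n t := by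
    have := ascPochhammer_pos n α hα
    have := rpow_nonneg (sub_nonneg.2 ht.2.le) (b - 1)
    have := rpow_nonneg ht.1.le (a + n - 1)
    positivity
  have hw_integral (n : ℕ) : ∫ t in Ioo (0 : ℝ) 1, w n t =
      ordinaryHypergeometricCoefficient α a c n * (Gamma a * Gamma b / Gamma c) := by
    have hc0 : 0 < c := by linarith
    have := (ascPochhammer_pos n c hc0).ne'
    have := (Gamma_pos_of_pos hc0).ne'
    rw [integral_const_mul, integral_rpow_mul_one_sub_rpow (by positivity) hb,
      show a + n + b = c + n by simp only [b]; ring, Gamma_add_nat ha, Gamma_add_nat hc0]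
    field_simp
  have hw_hasSum {t : ℝ} (ht : t ∈ Ioo (0 : ℝ) 1) :
      HasSum (fun n => w n t) (t ^ (a - 1) * (1 - t) ^ (b - α - 1)) := by
    have h1t : 0 < 1 - t := by linarith [ht.2]
    have hgeom := (hasSum_ascPochhammer_div_factorial_mul_pow α
      (abs_lt.2 ⟨by linarith [ht.1], ht.2⟩)).mul_right (t ^ (a - 1) * (1 - t) ^ (b - 1))
    have hterm (n : ℕ) : w n t = (ascPochhammer ℝ n).eval α / n.factorial * t ^ n *
        (t ^ (a - 1) * (1 - t) ^ (b - 1)) := by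
      simp only [w]
      rw [show a + n - 1 = n + (a - 1) by ring, rpow_add ht.1, rpow_natCast]
      ring
    simp only [hterm]
    rwa [show b - α - 1 = -α + (b - 1) by ring, rpow_add h1t, mul_left_comm]
  have hsum := hasSum_integral_of_dominated_convergence (μ := volume.restrict (Ioo (0 : ℝ) 1))
    (F := w) (f := fun t => t ^ (a - 1) * (1 - t) ^ (b - α - 1)) w
    (fun n => ((integrableOn_rpow_mul_one_sub_rpow (by positivity) hb).const_mul
      _).aestronglyMeasurable)
    (fun n => (ae_restrict_iff' measurableSet_Ioo).2 (.of_forall fun t ht =>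
      (norm_of_nonneg (hw_nonneg n ht)).le))
    ((ae_restrict_iff' measurableSet_Ioo).2 (.of_forall fun t ht => (hw_hasSum ht).summable))
    ((integrableOn_rpow_mul_one_sub_rpow ha hbα).congr_fun
      (fun t ht => (hw_hasSum ht).tsum_eq.symm) measurableSet_Ioo)
    ((ae_restrict_iff' measurableSet_Ioo).2 (.of_forall fun t ht => hw_hasSum ht))
  simp only [hw_integral] at hsum
  rw [integral_rpow_mul_one_sub_rpow ha hbα] at hsum
  have := (Gamma_pos_of_pos ha).ne'
  have := (Gamma_pos_of_pos hb).ne'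
  have := (Gamma_pos_of_pos (by linarith : 0 < c)).ne'
  refine (hasSum_mul_right_iff (by positivity : Gamma a * Gamma b / Gamma c ≠ 0)).1 ?_
  rwa [show a + (b - α) = c - α by simp only [b]; ring, show b - α = c - a - α by simp only [b],
    show Gamma a * Gamma (c - a - α) / Gamma (c - α) = Gamma c * Gamma (c - a - α) /
      (Gamma b * Gamma (c - α)) * (Gamma a * Gamma b / Gamma c) by field_simp] at hsum

theorem Gamma_three_halves_mul_Gamma_one_half_div_eq :
    Gamma (3 / 2) * Gamma (1 / 2) / (Gamma (2 / 3) * Gamma (4 / 3)) = 3 * √3 / 4 := by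
  have h32 : Gamma (3 / 2) = 1 / 2 * Gamma (1 / 2) := by
    rw [show (3 / 2 : ℝ) = 1 / 2 + 1 by norm_num, Gamma_add_one (by norm_num)]
  have h43 : Gamma (4 / 3) = 1 / 3 * Gamma (1 / 3) := by
    rw [show (4 / 3 : ℝ) = 1 / 3 + 1 by norm_num, Gamma_add_one (by norm_num)]
  have hreflection : Gamma (1 / 3) * Gamma (2 / 3) * √3 = 2 * π := by
    rw [show (2 / 3 : ℝ) = 1 - 1 / 3 by norm_num, Gamma_mul_Gamma_one_sub,
      show π * (1 / 3) = π / 3 by ring, sin_pi_div_three]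
    field_simp
  have := (Gamma_pos_of_pos (by norm_num : (0 : ℝ) < 1 / 3)).ne'
  have := (Gamma_pos_of_pos (by norm_num : (0 : ℝ) < 2 / 3)).ne'
  rw [h32, h43, Gamma_one_half_eq]
  field_simp
  linear_combination 4 * sq_sqrt pi_pos.le - 2 * hreflection

end Real

open Nat

theorem S_eq_factorial (n : ℕ) :
    S n = ((6 * n)! * n ! : ℝ) / (2 * (2 * n + 1) * (3 * n)! * (2 * n)! ^ 2) := by
  rcases eq_or_ne n 0 with rfl | hn
  · simp [S]
  rw [S, if_neg hn, cast_choose ℝ (by omega : 3 * n ≤ 6 * n), cast_choose ℝ (by omega : n ≤ 3 * n),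
    cast_choose ℝ (by omega : n ≤ 2 * n), show 6 * n - 3 * n = 3 * n by omega,
    show 3 * n - n = 2 * n by omega, show 2 * n - n = n by omega]
  field_simp

theorem S_succ (n : ℕ) :
    S (n + 1) * ((n + 1) * (2 * n + 3)) = 6 * (6 * n + 1) * (6 * n + 5) * S n := by
  rw [S_eq_factorial, S_eq_factorial, show 6 * (n + 1) = 6 * n + 1 + 1 + 1 + 1 + 1 + 1 by ring,
    show 3 * (n + 1) = 3 * n + 1 + 1 + 1 by ring, show 2 * (n + 1) = 2 * n + 1 + 1 by ring]
  simp only [factorial_succ]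
  push_cast
  field_simp
  ring

theorem S_div_pow_eq (n : ℕ) :
    S n / 108 ^ n = ordinaryHypergeometricCoefficient (1 / 6 : ℝ) (5 / 6) (3 / 2) n / 2 := by
  induction n with
  | zero => simp [S, ordinaryHypergeometricCoefficient]
  | succ n ih =>
    have := (ascPochhammer_pos n (3 / 2 : ℝ) (by norm_num)).ne'
    rw [div_eq_iff (by positivity)] at ih
    rw [eq_div_of_mul_eq (by positivity) (S_succ n), ih, pow_succ]
    simp only [ordinaryHypergeometricCoefficient, ascPochhammer_succ_eval, factorial_succ]
    push_cast
    field_simp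
    ring

theorem S_sum_at_108 :
    HasSum (fun n : ℕ => S n / 108 ^ n) (3 * Real.sqrt 3 / 8) := by
  have h := Real.hasSum_ordinaryHypergeometricCoefficient_one (α := 1 / 6) (a := 5 / 6)
    (c := 3 / 2) (by norm_num) (by norm_num) (by norm_num)
  norm_num only [Real.Gamma_three_halves_mul_Gamma_one_half_div_eq] at h
  rw [funext S_div_pow_eq, show 3 * √3 / 8 = 3 * √3 / 4 / 2 by ring]
  exact h.div_const 2
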